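/- Fix points v₁, …, v_m ∈ ℝ² and unit vectors n₁, …, n_m ∈ ℝ² (indices taken modulo m). For x ∈ ℝ² set dᵢ(x) = (vᵢ − x)·nᵢ, ñᵢ(x) = nᵢ/dᵢ(x), wᵢ(x) = det(ñᵢ(x), ñᵢ₊₁(x)), W(x) = Σ_{j=1}^m w_j(x), and λᵢ(x) = wᵢ(x)/W(x), where det(a,b) = a₁b₂ − a₂b₁. Let x₀ ∈ ℝ² be a point at which dᵢ(x₀) ≠ 0 for all i, det(nᵢ, nᵢ₊₁) ≠ 0 for all i, and W(x₀) ≠ 0. Then each λᵢ is differentiable at x₀ and ∇λᵢ(x₀) = λᵢ(x₀) ( ñᵢ(x₀) + ñᵢ₊₁(x₀) − Σ_{j=1}^m λ_j(x₀) ( ñ_j(x₀) + ñ_{j+1}(x₀) ) ). -/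

import Mathlib

/-!
Writing `∇f = f • R` (so `R = ∇ log |f|`), log-gradients add under products and change sign
under inversion. Since `1/dᵢ` has log-gradient `ñᵢ` and `wᵢ = det(nᵢ, nᵢ₊₁) / (dᵢ dᵢ₊₁)`,
`wᵢ` has log-gradient `Rᵢ = ñᵢ + ñᵢ₊₁`; the sum `W` has log-gradient `∑ⱼ λⱼ Rⱼ`, and hence
`λᵢ = wᵢ · W⁻¹` has log-gradient `Rᵢ - ∑ⱼ λⱼ Rⱼ`.
-/

open InnerProductSpace

section GradientCalculus

variable {F : Type*} [NormedAddCommGroup F] [InnerProductSpace ℝ F] [CompleteSpace F]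
  {f g : F → ℝ} {f' g' x : F}

theorem HasGradientAt.mul (hf : HasGradientAt f f' x) (hg : HasGradientAt g g' x) :
    HasGradientAt (fun y => f y * g y) (f x • g' + g x • f') x := by
  rw [hasGradientAt_iff_hasFDerivAt] at *
  simpa using hf.fun_mul hg

theorem HasGradientAt.const_mul (c : ℝ) (hf : HasGradientAt f f' x) :
    HasGradientAt (fun y => c * f y) (c • f') x := by
  rw [hasGradientAt_iff_hasFDerivAt] at *
  simpa using hf.const_mul c

theorem HasGradientAt.inv (hf : HasGradientAt f f' x) (hx : f x ≠ 0) :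
    HasGradientAt (fun y => (f y)⁻¹) (-(f x ^ 2)⁻¹ • f') x := by
  rw [hasGradientAt_iff_hasFDerivAt] at *
  simpa [Function.comp_def] using (hasDerivAt_inv hx).comp_hasFDerivAt x hf

theorem HasGradientAt.sum {ι : Type*} (s : Finset ι) {f : ι → F → ℝ} {f' : ι → F}
    (h : ∀ j ∈ s, HasGradientAt (f j) (f' j) x) :
    HasGradientAt (fun y => ∑ j ∈ s, f j y) (∑ j ∈ s, f' j) x := by
  simp only [hasGradientAt_iff_hasFDerivAt] at *
  simpa using HasFDerivAt.fun_sum h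

theorem hasGradientAt_inner_sub (v n x : F) :
    HasGradientAt (fun y => inner ℝ (v - y) n) (-n) x := by
  rw [hasGradientAt_iff_hasFDerivAt]
  refine (((hasFDerivAt_id x).const_sub v).inner ℝ (hasFDerivAt_const n x)).congr_fderiv ?_
  ext y
  simp [real_inner_comm]

/-- `∇f x = f x • r`: away from the zeros of `f`, `r` is the ratio `∇f / f = ∇ log |f|`
(the paper's `R = ∇w / w`). -/
def HasLogGradientAt (f : F → ℝ) (r x : F) : Prop :=
  HasGradientAt f (f x • r) x

theorem HasLogGradientAt.mul {r s : F} (hf : HasLogGradientAt f r x)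
    (hg : HasLogGradientAt g s x) : HasLogGradientAt (fun y => f y * g y) (r + s) x := by
  show HasGradientAt _ ((f x * g x) • (r + s)) x
  convert HasGradientAt.mul hf hg using 1
  module

theorem HasLogGradientAt.const_mul (c : ℝ) {r : F} (hf : HasLogGradientAt f r x) :
    HasLogGradientAt (fun y => c * f y) r x := by
  unfold HasLogGradientAt at *
  simpa only [mul_smul] using HasGradientAt.const_mul c hf

theorem HasLogGradientAt.inv {r : F} (hf : HasLogGradientAt f r x) (hx : f x ≠ 0) :
    HasLogGradientAt (fun y => (f y)⁻¹) (-r) x := by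
  show HasGradientAt _ ((f x)⁻¹ • -r) x
  convert HasGradientAt.inv hf hx using 1
  match_scalars
  field_simp

theorem hasLogGradientAt_inner_sub (v n : F) (hx : inner ℝ (v - x) n ≠ 0) :
    HasLogGradientAt (fun y => inner ℝ (v - y) n) (-(inner ℝ (v - x) n)⁻¹ • n) x := by
  show HasGradientAt _ (inner ℝ (v - x) n • -(inner ℝ (v - x) n)⁻¹ • n) x
  convert hasGradientAt_inner_sub v n x using 1
  rw [smul_smul, mul_neg, mul_inv_cancel₀ hx, neg_one_smul]

theorem hasLogGradientAt_inv_inner_sub (v n : F) (hx : inner ℝ (v - x) n ≠ 0) :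
    HasLogGradientAt (fun y => (inner ℝ (v - y) n)⁻¹) ((inner ℝ (v - x) n)⁻¹ • n) x := by
  simpa only [neg_smul, neg_neg] using (hasLogGradientAt_inner_sub v n hx).inv hx

theorem HasLogGradientAt.sum {ι : Type*} [Fintype ι] {f : ι → F → ℝ} {r : ι → F}
    (h : ∀ j, HasLogGradientAt (f j) (r j) x) (hx : ∑ j, f j x ≠ 0) :
    HasLogGradientAt (fun y => ∑ j, f j y) (∑ j, (f j x / ∑ k, f k x) • r j) x := by
  unfold HasLogGradientAt at *
  convert HasGradientAt.sum Finset.univ fun j _ => h j using 1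
  simp only [Finset.smul_sum, smul_smul]
  refine Finset.sum_congr rfl fun j _ => ?_
  field_simp

theorem HasLogGradientAt.div_sum {ι : Type*} [Fintype ι] {f : ι → F → ℝ} {r : ι → F}
    (h : ∀ j, HasLogGradientAt (f j) (r j) x) (hx : ∑ j, f j x ≠ 0) (i : ι) :
    HasLogGradientAt (fun y => f i y / ∑ j, f j y)
      (r i - ∑ j, (f j x / ∑ k, f k x) • r j) x := by
  simpa only [div_eq_mul_inv, sub_eq_add_neg] using (h i).mul ((HasLogGradientAt.sum h hx).inv hx)

end GradientCalculus

theorem wachspress_coordinate_gradient_general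
    (m : ℕ) [NeZero m]
    (v n : Fin m → EuclideanSpace ℝ (Fin 2))
    (x₀ : EuclideanSpace ℝ (Fin 2)) :
    let d : Fin m → EuclideanSpace ℝ (Fin 2) → ℝ := fun i x => inner ℝ (v i - x) (n i)
    let nt : Fin m → EuclideanSpace ℝ (Fin 2) → EuclideanSpace ℝ (Fin 2) :=
      fun i x => (d i x)⁻¹ • n i
    let w : Fin m → EuclideanSpace ℝ (Fin 2) → ℝ :=
      fun i x => nt i x 0 * nt (i + 1) x 1 - nt i x 1 * nt (i + 1) x 0
    let W : EuclideanSpace ℝ (Fin 2) → ℝ := fun x => ∑ j, w j x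
    (∀ i, d i x₀ ≠ 0) → W x₀ ≠ 0 →
      ∀ i : Fin m,
        HasGradientAt (fun x => w i x / W x)
          ((w i x₀ / W x₀) •
            (nt i x₀ + nt (i + 1) x₀ -
              ∑ j, (w j x₀ / W x₀) • (nt j x₀ + nt (j + 1) x₀))) x₀ := by
  intro d nt w W hd hW i
  have hnt : ∀ j, HasLogGradientAt (fun x => (d j x)⁻¹) (nt j x₀) x₀ := fun j =>
    hasLogGradientAt_inv_inner_sub (v j) (n j) (hd j)
  have hw : ∀ j, HasLogGradientAt (w j) (nt j x₀ + nt (j + 1) x₀) x₀ := fun j => by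
    have hwj : w j = fun x => (n j 0 * n (j + 1) 1 - n j 1 * n (j + 1) 0) *
        ((d j x)⁻¹ * (d (j + 1) x)⁻¹) := by
      funext x
      simp only [w, nt, PiLp.smul_apply, smul_eq_mul]
      ring
    rw [hwj]
    exact ((hnt j).mul (hnt (j + 1))).const_mul _
  exact HasLogGradientAt.div_sum hw hW i

/-- Gradient formula for the Wachspress coordinates. With vertices
`vᵢ` and unit edge normals `nᵢ` (indices mod m), `dᵢ(x) = (vᵢ − x)·nᵢ`,
`ñᵢ(x) = nᵢ/dᵢ(x)`, `wᵢ(x) = det(ñᵢ(x), ñᵢ₊₁(x))`, `W = ∑ⱼ wⱼ`, `λᵢ = wᵢ/W`,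
at a point `x₀` with `dᵢ(x₀) ≠ 0` for all `i`, `det(nᵢ, nᵢ₊₁) ≠ 0` for all `i`,
and `W(x₀) ≠ 0`, each `λᵢ` is differentiable at `x₀` with
`∇λᵢ(x₀) = λᵢ(x₀)(ñᵢ(x₀) + ñᵢ₊₁(x₀) − ∑ⱼ λⱼ(x₀)(ñⱼ(x₀) + ñⱼ₊₁(x₀)))`. -/
theorem wachspress_coordinate_gradient
    (m : ℕ) [NeZero m]
    (v n : Fin m → EuclideanSpace ℝ (Fin 2))
    (hn : ∀ i, ‖n i‖ = 1)
    (x₀ : EuclideanSpace ℝ (Fin 2))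
    (hdet : ∀ i : Fin m, n i 0 * n (i + 1) 1 - n i 1 * n (i + 1) 0 ≠ 0) :
    let d : Fin m → EuclideanSpace ℝ (Fin 2) → ℝ := fun i x => inner ℝ (v i - x) (n i)
    let nt : Fin m → EuclideanSpace ℝ (Fin 2) → EuclideanSpace ℝ (Fin 2) :=
      fun i x => (d i x)⁻¹ • n i
    let w : Fin m → EuclideanSpace ℝ (Fin 2) → ℝ :=
      fun i x => nt i x 0 * nt (i + 1) x 1 - nt i x 1 * nt (i + 1) x 0
    let W : EuclideanSpace ℝ (Fin 2) → ℝ := fun x => ∑ j, w j x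
    (∀ i, d i x₀ ≠ 0) → W x₀ ≠ 0 →
      ∀ i : Fin m,
        HasGradientAt (fun x => w i x / W x)
          ((w i x₀ / W x₀) •
            (nt i x₀ + nt (i + 1) x₀ -
              ∑ j, (w j x₀ / W x₀) • (nt j x₀ + nt (j + 1) x₀))) x₀ :=
  wachspress_coordinate_gradient_general m v n x₀
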